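/- arXiv:1804.09097 — 2 statements merged into one kernel-verified Lean document; each statement's English description precedes it below -/
import Mathlib

section
/- Suppose 𝒜 has the (3s₁,3s₂,2)-restricted isometry property with constant δ > 0, u ∈ ℂ^{n₁} is s₁-sparse with ‖u‖ = 1, v ∈ ℂ^{n₂} is s₂-sparse with ‖v‖ = 1, z ∈ ℂ^m, 𝒜(uv*) ≠ 0, ν := ‖z‖/‖𝒜(uv*)‖, and b := 𝒜(uv*) + z. Then for every J₁ ⊆ [n₁] with |J₁| ≤ s₁ and every index k ∈ [n₂], ‖Π_{J₁}·𝒜*(b)·Π_{{k}}‖_F ≤ ‖Π_{J₁} u‖·|v_k| + (δ + ν + δν). -/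
/-!
Let `Y = Π_J 𝒜*(b) Π_{k}`. If `Y ≠ 0`, the unit matrix `W = Y / ‖Y‖_F` is supported on `J × {k}`,
so it has rank one, at most `s₁` nonzero rows and one nonzero column, and
`‖Y‖_F = Re ⟨𝒜*(b), W⟩ = Re ⟨𝒜(uv*), 𝒜W⟩ + Re ⟨z, 𝒜W⟩`.
Polarization, with the RIP applied to the rank-two matrices `uv* ± W`, bounds the first term by
`Re ⟨uv*, W⟩ + δ = Re ⟨Π_J uv* Π_{k}, W⟩ + δ ≤ ‖Π_J u‖ |v_k| + δ`. By Cauchy–Schwarz the second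
term is at most `‖z‖ ‖𝒜W‖ = ν ‖𝒜(uv*)‖ ‖𝒜W‖ ≤ ν (1 + δ)`, since the RIP bounds both norms
by `√(1 + δ)`.
-/

open scoped BigOperators
noncomputable section
open Classical

/-- The ℓ₂ norm of a vector in ℂ^n. -/
def l2norm {n : ℕ} (x : Fin n → ℂ) : ℝ := Real.sqrt (∑ i, ‖x i‖ ^ 2)

/-- The Frobenius norm of a matrix. -/
def frobNorm {n₁ n₂ : ℕ} (X : Matrix (Fin n₁) (Fin n₂) ℂ) : ℝ :=
  Real.sqrt (∑ i, ∑ j, ‖X i j‖ ^ 2)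

/-- The spectral norm (ℓ₂ operator norm) of a matrix. -/
def specNorm {n₁ n₂ : ℕ} (X : Matrix (Fin n₁) (Fin n₂) ℂ) : ℝ :=
  sSup {c : ℝ | ∃ x : Fin n₂ → ℂ, l2norm x = 1 ∧ c = l2norm (X.mulVec x)}

/-- A vector is `s`-sparse if it has at most `s` nonzero entries. -/
def Sparse {n : ℕ} (s : ℕ) (x : Fin n → ℂ) : Prop :=
  {i | x i ≠ 0}.ncard ≤ s

/-- The linear map 𝒜 determined by the matrices A₁, …, A_m. -/
def opA {n₁ n₂ m : ℕ} (A : Fin m → Matrix (Fin n₁) (Fin n₂) ℂ)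
    (X : Matrix (Fin n₁) (Fin n₂) ℂ) : Fin m → ℂ :=
  fun ℓ => ((A ℓ).conjTranspose * X).trace

/-- The adjoint 𝒜* of 𝒜 with respect to the Frobenius inner product. -/
def opAadj {n₁ n₂ m : ℕ} (A : Fin m → Matrix (Fin n₁) (Fin n₂) ℂ)
    (z : Fin m → ℂ) : Matrix (Fin n₁) (Fin n₂) ℂ :=
  ∑ ℓ, z ℓ • A ℓ

/-- The (s₁, s₂, r)-restricted isometry property with constant δ. -/
def RIP {n₁ n₂ m : ℕ} (A : Fin m → Matrix (Fin n₁) (Fin n₂) ℂ)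
    (s₁ s₂ r : ℕ) (δ : ℝ) : Prop :=
  ∀ X : Matrix (Fin n₁) (Fin n₂) ℂ, X.rank ≤ r →
    {i | X i ≠ 0}.ncard ≤ s₁ → {j | X.transpose j ≠ 0}.ncard ≤ s₂ →
    (1 - δ) * frobNorm X ^ 2 ≤ l2norm (opA A X) ^ 2 ∧
      l2norm (opA A X) ^ 2 ≤ (1 + δ) * frobNorm X ^ 2

/-- The diagonal 0/1 projection matrix onto the coordinates in `J`. -/
def proj {n : ℕ} (J : Finset (Fin n)) : Matrix (Fin n) (Fin n) ℂ :=
  Matrix.diagonal fun i => if i ∈ J then 1 else 0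

/-- The outer product u v^*. -/
def outer {n₁ n₂ : ℕ} (u : Fin n₁ → ℂ) (v : Fin n₂ → ℂ) :
    Matrix (Fin n₁) (Fin n₂) ℂ :=
  Matrix.of fun i j => u i * star (v j)

/-- The norm ‖x‖_[k] : the ℓ₂ norm of the best k-sparse approximation of x. -/
def knorm {n : ℕ} (k : ℕ) (x : Fin n → ℂ) : ℝ :=
  sSup {c : ℝ | ∃ I : Finset (Fin n), I.card = k ∧ c = Real.sqrt (∑ i ∈ I, ‖x i‖ ^ 2)}

/-- The ℓ∞ norm of a vector. -/
def linftyNorm {n : ℕ} (x : Fin n → ℂ) : ℝ :=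
  sSup {c : ℝ | ∃ i, c = ‖x i‖}

/-- The sine of the angle between two unit vectors. -/
def sinAngle {n : ℕ} (w v : Fin n → ℂ) : ℝ :=
  Real.sqrt (1 - ‖∑ i, star (w i) * v i‖ ^ 2)

open scoped InnerProductSpace
open RCLike

theorem Matrix.rank_add_le {m n K : Type*} [Fintype n] [Field K] (A B : Matrix m n K) :
    (A + B).rank ≤ A.rank + B.rank := by
  rw [Matrix.rank, Matrix.rank, Matrix.rank, Matrix.mulVecLin_add]
  exact (Submodule.finrank_mono (LinearMap.range_add_le A.mulVecLin B.mulVecLin)).trans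
    (Submodule.finrank_add_le_finrank_add_finrank _ _)

section

variable {n n₁ n₂ m : ℕ}

def frobVec (X : Matrix (Fin n₁) (Fin n₂) ℂ) : EuclideanSpace ℂ (Fin n₁ × Fin n₂) :=
  WithLp.toLp 2 fun p => X p.1 p.2

@[simp] lemma frobVec_add (X Y : Matrix (Fin n₁) (Fin n₂) ℂ) :
    frobVec (X + Y) = frobVec X + frobVec Y := rfl

@[simp] lemma frobVec_sub (X Y : Matrix (Fin n₁) (Fin n₂) ℂ) :
    frobVec (X - Y) = frobVec X - frobVec Y := rfl

@[simp] lemma frobVec_smul (c : ℂ) (X : Matrix (Fin n₁) (Fin n₂) ℂ) :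
    frobVec (c • X) = c • frobVec X := rfl

lemma l2norm_nonneg (x : Fin n → ℂ) : 0 ≤ l2norm x := Real.sqrt_nonneg _

lemma frobNorm_nonneg (X : Matrix (Fin n₁) (Fin n₂) ℂ) : 0 ≤ frobNorm X := Real.sqrt_nonneg _

lemma l2norm_eq_norm (x : Fin n → ℂ) : l2norm x = ‖WithLp.toLp 2 x‖ := by
  rw [EuclideanSpace.norm_eq]; rfl

lemma frobNorm_eq_norm (X : Matrix (Fin n₁) (Fin n₂) ℂ) : frobNorm X = ‖frobVec X‖ := by
  rw [EuclideanSpace.norm_eq, Fintype.sum_prod_type]; rfl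

lemma inner_toLp (x y : Fin n → ℂ) :
    ⟪(WithLp.toLp 2 x : EuclideanSpace ℂ (Fin n)), WithLp.toLp 2 y⟫_ℂ = ∑ i, star (x i) * y i := by
  simp [PiLp.inner_apply, mul_comm]

lemma inner_frobVec (X Y : Matrix (Fin n₁) (Fin n₂) ℂ) :
    ⟪frobVec X, frobVec Y⟫_ℂ = ∑ i, ∑ j, star (X i j) * Y i j := by
  rw [PiLp.inner_apply, Fintype.sum_prod_type]
  simp [frobVec, mul_comm]

lemma l2norm_ne_zero {x : Fin n → ℂ} (hx : x ≠ 0) : l2norm x ≠ 0 := by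
  rw [l2norm_eq_norm, norm_ne_zero_iff]
  exact fun h => hx (congrArg WithLp.ofLp h)

lemma opA_add (A : Fin m → Matrix (Fin n₁) (Fin n₂) ℂ) (X Y : Matrix (Fin n₁) (Fin n₂) ℂ) :
    opA A (X + Y) = opA A X + opA A Y := by
  funext ℓ; simp [opA, Matrix.mul_add]

lemma opA_sub (A : Fin m → Matrix (Fin n₁) (Fin n₂) ℂ) (X Y : Matrix (Fin n₁) (Fin n₂) ℂ) :
    opA A (X - Y) = opA A X - opA A Y := by
  funext ℓ; simp [opA, Matrix.mul_sub]

lemma inner_frobVec_opAadj (A : Fin m → Matrix (Fin n₁) (Fin n₂) ℂ) (b : Fin m → ℂ)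
    (X : Matrix (Fin n₁) (Fin n₂) ℂ) :
    ⟪frobVec (opAadj A b), frobVec X⟫_ℂ =
      ⟪(WithLp.toLp 2 b : EuclideanSpace ℂ (Fin m)), WithLp.toLp 2 (opA A X)⟫_ℂ := by
  simp only [inner_frobVec, inner_toLp, opAadj, opA, Matrix.trace, Matrix.diag, Matrix.mul_apply,
    Matrix.conjTranspose_apply, Matrix.sum_apply, Matrix.smul_apply, smul_eq_mul, star_sum,
    star_mul', Finset.sum_mul, Finset.mul_sum]
  rw [Finset.sum_comm_cycle]
  refine Finset.sum_congr rfl fun ℓ _ => ?_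
  rw [Finset.sum_comm]
  simp_rw [mul_assoc]

lemma proj_mul_mul_proj_apply (J : Finset (Fin n₁)) (K : Finset (Fin n₂))
    (M : Matrix (Fin n₁) (Fin n₂) ℂ) (i : Fin n₁) (j : Fin n₂) :
    (proj J * M * proj K) i j = if i ∈ J ∧ j ∈ K then M i j else 0 := by
  rw [proj, proj, Matrix.mul_diagonal, Matrix.diagonal_mul]
  split_ifs <;> simp_all

lemma proj_mul_proj_mul_mul_proj_mul_proj (J : Finset (Fin n₁)) (K : Finset (Fin n₂))
    (M : Matrix (Fin n₁) (Fin n₂) ℂ) :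
    proj J * (proj J * M * proj K) * proj K = proj J * M * proj K := by
  ext i j
  simp only [proj_mul_mul_proj_apply]
  split_ifs <;> simp_all

lemma inner_frobVec_proj_mul_mul_proj (J : Finset (Fin n₁)) (K : Finset (Fin n₂))
    (X Y : Matrix (Fin n₁) (Fin n₂) ℂ) :
    ⟪frobVec (proj J * X * proj K), frobVec Y⟫_ℂ =
      ⟪frobVec X, frobVec (proj J * Y * proj K)⟫_ℂ := by
  simp only [inner_frobVec, proj_mul_mul_proj_apply]
  refine Finset.sum_congr rfl fun i _ => Finset.sum_congr rfl fun j _ => ?_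
  split_ifs <;> simp

lemma proj_mul_outer_mul_proj (J : Finset (Fin n₁)) (K : Finset (Fin n₂))
    (u : Fin n₁ → ℂ) (v : Fin n₂ → ℂ) :
    proj J * outer u v * proj K = outer ((proj J).mulVec u) ((proj K).mulVec v) := by
  ext i j
  simp only [outer, proj, Matrix.mulVec_diagonal, Matrix.of_apply]
  split_ifs <;> simp_all

lemma frobNorm_outer (x : Fin n₁ → ℂ) (y : Fin n₂ → ℂ) :
    frobNorm (outer x y) = l2norm x * l2norm y := by
  simp only [frobNorm, l2norm, outer, Matrix.of_apply, norm_mul, norm_star, mul_pow,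
    ← Finset.sum_mul_sum]
  exact Real.sqrt_mul (Finset.sum_nonneg fun i _ => by positivity) _

lemma l2norm_proj_singleton_mulVec (v : Fin n → ℂ) (k : Fin n) :
    l2norm ((proj {k}).mulVec v) = ‖v k‖ := by
  simp [l2norm, proj, Matrix.mulVec_diagonal, apply_ite (fun x : ℂ => ‖x‖ ^ 2)]

lemma Sparse.one_le {s : ℕ} {x : Fin n → ℂ} (hx : Sparse s x) (hx0 : x ≠ 0) : 1 ≤ s := by
  obtain ⟨i, hi⟩ := Function.ne_iff.mp hx0
  exact ((Set.ncard_pos (Set.toFinite _)).mpr ⟨i, hi⟩).trans_le hx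

lemma ncard_support_add_le {α β : Type*} [Finite α] [AddZeroClass β] (f g : α → β) :
    {a | f a + g a ≠ 0}.ncard ≤ {a | f a ≠ 0}.ncard + {a | g a ≠ 0}.ncard :=
  (Set.ncard_le_ncard (Function.support_add f g) (Set.toFinite _)).trans (Set.ncard_union_le _ _)

structure IsSparseLowRank (s₁ s₂ r : ℕ) (X : Matrix (Fin n₁) (Fin n₂) ℂ) : Prop where
  rank_le : X.rank ≤ r
  rows_ncard_le : {i | X i ≠ 0}.ncard ≤ s₁
  cols_ncard_le : {j | X.transpose j ≠ 0}.ncard ≤ s₂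

namespace IsSparseLowRank

variable {s₁ s₂ r t₁ t₂ q : ℕ} {X W : Matrix (Fin n₁) (Fin n₂) ℂ}

lemma mono (h : IsSparseLowRank s₁ s₂ r X) (h₁ : s₁ ≤ t₁) (h₂ : s₂ ≤ t₂) (h₃ : r ≤ q) :
    IsSparseLowRank t₁ t₂ q X :=
  ⟨h.rank_le.trans h₃, h.rows_ncard_le.trans h₁, h.cols_ncard_le.trans h₂⟩

lemma add (hX : IsSparseLowRank s₁ s₂ r X) (hW : IsSparseLowRank t₁ t₂ q W) :
    IsSparseLowRank (s₁ + t₁) (s₂ + t₂) (r + q) (X + W) :=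
  ⟨(Matrix.rank_add_le X W).trans (add_le_add hX.rank_le hW.rank_le),
    (ncard_support_add_le X W).trans (add_le_add hX.rows_ncard_le hW.rows_ncard_le),
    (ncard_support_add_le X.transpose W.transpose).trans
      (add_le_add hX.cols_ncard_le hW.cols_ncard_le)⟩

lemma neg (hW : IsSparseLowRank s₁ s₂ r W) : IsSparseLowRank s₁ s₂ r (-W) := by
  refine ⟨?_, ?_, ?_⟩
  · rw [← Matrix.mul_one W, ← Matrix.mul_neg]
    exact (Matrix.rank_mul_le_left W _).trans hW.rank_le
  · exact (Set.ext fun _ => neg_ne_zero : {i | (-W) i ≠ 0} = _) ▸ hW.rows_ncard_le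
  · exact (Set.ext fun _ => neg_ne_zero : {j | (-W).transpose j ≠ 0} = _) ▸ hW.cols_ncard_le

lemma sub (hX : IsSparseLowRank s₁ s₂ r X) (hW : IsSparseLowRank t₁ t₂ q W) :
    IsSparseLowRank (s₁ + t₁) (s₂ + t₂) (r + q) (X - W) := by
  simpa only [sub_eq_add_neg] using hX.add hW.neg

end IsSparseLowRank

lemma isSparseLowRank_outer {s₁ s₂ : ℕ} {u : Fin n₁ → ℂ} {v : Fin n₂ → ℂ}
    (hu : Sparse s₁ u) (hv : Sparse s₂ v) : IsSparseLowRank s₁ s₂ 1 (outer u v) := by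
  refine ⟨Matrix.rank_vecMulVec_le u (star v), ?_, ?_⟩
  · refine (Set.ncard_le_ncard (t := {i | u i ≠ 0})
      (fun i (hi : outer u v i ≠ 0) hui => hi ?_) (Set.toFinite _)).trans hu
    ext j; simp [outer, hui]
  · refine (Set.ncard_le_ncard (t := {j | v j ≠ 0})
      (fun j (hj : (outer u v).transpose j ≠ 0) hvj => hj ?_) (Set.toFinite _)).trans hv
    ext i; simp [outer, hvj]

lemma isSparseLowRank_proj_mul_mul_proj (J : Finset (Fin n₁)) (K : Finset (Fin n₂))
    (M : Matrix (Fin n₁) (Fin n₂) ℂ) :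
    IsSparseLowRank J.card K.card K.card (proj J * M * proj K) := by
  refine ⟨?_, ?_, ?_⟩
  · refine (Matrix.rank_mul_le_right _ _).trans ?_
    rw [proj, Matrix.rank_diagonal, Fintype.card_subtype]
    simp
  · refine (Set.ncard_le_ncard (fun i hi => Finset.mem_coe.mpr ?_) J.finite_toSet).trans
      (Set.ncard_coe_finset J).le
    by_contra hiJ
    exact hi (funext fun j => by simp [proj_mul_mul_proj_apply, hiJ])
  · refine (Set.ncard_le_ncard (fun j hj => Finset.mem_coe.mpr ?_) K.finite_toSet).trans
      (Set.ncard_coe_finset K).le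
    by_contra hjK
    exact hj (funext fun i => by simp [proj_mul_mul_proj_apply, hjK])

lemma re_inner_le_of_sq_norm_bounds {𝕜 E F : Type*} [RCLike 𝕜] [NormedAddCommGroup E]
    [InnerProductSpace 𝕜 E] [NormedAddCommGroup F] [InnerProductSpace 𝕜 F]
    {x w : E} {p q : F} {δ : ℝ}
    (hadd : ‖p + q‖ ^ 2 ≤ (1 + δ) * ‖x + w‖ ^ 2) (hsub : (1 - δ) * ‖x - w‖ ^ 2 ≤ ‖p - q‖ ^ 2) :
    re ⟪p, q⟫_𝕜 ≤ re ⟪x, w⟫_𝕜 + δ * (‖x‖ ^ 2 + ‖w‖ ^ 2) / 2 := by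
  rw [@norm_add_sq 𝕜, @norm_add_sq 𝕜] at hadd
  rw [@norm_sub_sq 𝕜, @norm_sub_sq 𝕜] at hsub
  linarith

namespace RIP

variable {A : Fin m → Matrix (Fin n₁) (Fin n₂) ℂ} {s₁ s₂ r : ℕ} {δ : ℝ}
  {X W : Matrix (Fin n₁) (Fin n₂) ℂ}

lemma sq_l2norm_le (h : RIP A s₁ s₂ r δ) (hX : IsSparseLowRank s₁ s₂ r X) :
    l2norm (opA A X) ^ 2 ≤ (1 + δ) * frobNorm X ^ 2 :=
  (h X hX.rank_le hX.rows_ncard_le hX.cols_ncard_le).2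

lemma le_sq_l2norm (h : RIP A s₁ s₂ r δ) (hX : IsSparseLowRank s₁ s₂ r X) :
    (1 - δ) * frobNorm X ^ 2 ≤ l2norm (opA A X) ^ 2 :=
  (h X hX.rank_le hX.rows_ncard_le hX.cols_ncard_le).1

lemma nonneg (h : RIP A s₁ s₂ r δ) (hX : IsSparseLowRank s₁ s₂ r X) (hX0 : frobNorm X ≠ 0) :
    0 ≤ δ := by
  have hpos : 0 < frobNorm X ^ 2 := by positivity
  nlinarith [(h.le_sq_l2norm hX).trans (h.sq_l2norm_le hX)]

lemma re_inner_opA_le (h : RIP A s₁ s₂ r δ) (hadd : IsSparseLowRank s₁ s₂ r (X + W))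
    (hsub : IsSparseLowRank s₁ s₂ r (X - W)) :
    re ⟪(WithLp.toLp 2 (opA A X) : EuclideanSpace ℂ (Fin m)), WithLp.toLp 2 (opA A W)⟫_ℂ ≤
      re ⟪frobVec X, frobVec W⟫_ℂ + δ * (frobNorm X ^ 2 + frobNorm W ^ 2) / 2 := by
  have h₁ := h.sq_l2norm_le hadd
  have h₂ := h.le_sq_l2norm hsub
  rw [opA_add, l2norm_eq_norm, WithLp.toLp_add, frobNorm_eq_norm, frobVec_add] at h₁
  rw [opA_sub, l2norm_eq_norm, WithLp.toLp_sub, frobNorm_eq_norm, frobVec_sub] at h₂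
  rw [frobNorm_eq_norm, frobNorm_eq_norm]
  exact re_inner_le_of_sq_norm_bounds h₁ h₂

lemma re_inner_opAadj_le (h : RIP A s₁ s₂ r δ) (hX : IsSparseLowRank s₁ s₂ r X)
    (hW : IsSparseLowRank s₁ s₂ r W) (hadd : IsSparseLowRank s₁ s₂ r (X + W))
    (hsub : IsSparseLowRank s₁ s₂ r (X - W)) (hXn : frobNorm X = 1) (hWn : frobNorm W = 1)
    (hXA : opA A X ≠ 0) (z : Fin m → ℂ) :
    re ⟪frobVec (opAadj A (opA A X + z)), frobVec W⟫_ℂ ≤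
      re ⟪frobVec X, frobVec W⟫_ℂ + δ + l2norm z / l2norm (opA A X) * (1 + δ) := by
  have hp := h.sq_l2norm_le hX
  have hq := h.sq_l2norm_le hW
  rw [hXn, one_pow, mul_one] at hp
  rw [hWn, one_pow, mul_one] at hq
  have hsignal := h.re_inner_opA_le hadd hsub
  rw [hXn, hWn] at hsignal
  have hnoise : re ⟪(WithLp.toLp 2 z : EuclideanSpace ℂ (Fin m)), WithLp.toLp 2 (opA A W)⟫_ℂ ≤
      l2norm z / l2norm (opA A X) * (1 + δ) :=
    calc _ ≤ l2norm z * l2norm (opA A W) := by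
          rw [l2norm_eq_norm, l2norm_eq_norm]; exact re_inner_le_norm _ _
      _ = l2norm z / l2norm (opA A X) * (l2norm (opA A X) * l2norm (opA A W)) := by
          field_simp [l2norm_ne_zero hXA]
      _ ≤ l2norm z / l2norm (opA A X) * (1 + δ) := by
          gcongr
          · exact div_nonneg (l2norm_nonneg _) (l2norm_nonneg _)
          · nlinarith [two_mul_le_add_sq (l2norm (opA A X)) (l2norm (opA A W))]
  rw [inner_frobVec_opAadj, WithLp.toLp_add, inner_add_left, map_add]
  linarith

end RIP

/-- Duality: the bound is tested at `W = Y / ‖Y‖_F` for `Y = proj J * M * proj K`. -/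
lemma frobNorm_proj_mul_mul_proj_le (J : Finset (Fin n₁)) (K : Finset (Fin n₂))
    (M : Matrix (Fin n₁) (Fin n₂) ℂ) {β : ℝ} (hβ : 0 ≤ β)
    (h : ∀ W, proj J * W * proj K = W → frobNorm W = 1 → re ⟪frobVec M, frobVec W⟫_ℂ ≤ β) :
    frobNorm (proj J * M * proj K) ≤ β := by
  set Y := proj J * M * proj K with hYdef
  rcases (frobNorm_nonneg Y).eq_or_lt with hY | hY
  · rwa [← hY]
  have hMY : re ⟪frobVec M, frobVec Y⟫_ℂ = frobNorm Y ^ 2 := by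
    rw [hYdef, ← proj_mul_proj_mul_mul_proj_mul_proj, ← inner_frobVec_proj_mul_mul_proj,
      proj_mul_proj_mul_mul_proj_mul_proj, inner_self_eq_norm_sq, frobNorm_eq_norm]
  have hW := h ((((frobNorm Y)⁻¹ : ℝ) : ℂ) • Y)
    (by rw [Matrix.mul_smul, Matrix.smul_mul, proj_mul_proj_mul_mul_proj_mul_proj])
    (by rw [frobNorm_eq_norm, frobVec_smul, norm_smul, ← frobNorm_eq_norm, Complex.norm_real,
      Real.norm_of_nonneg (inv_nonneg.mpr hY.le), inv_mul_cancel₀ hY.ne'])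
  rw [frobVec_smul, inner_smul_right, RCLike.re_to_complex, Complex.re_ofReal_mul,
    ← RCLike.re_to_complex, hMY] at hW
  calc frobNorm Y = (frobNorm Y)⁻¹ * frobNorm Y ^ 2 := by field_simp
    _ ≤ β := hW

lemma re_inner_le_frobNorm_proj_mul_mul_proj {J : Finset (Fin n₁)} {K : Finset (Fin n₂)}
    {W : Matrix (Fin n₁) (Fin n₂) ℂ} (hW : proj J * W * proj K = W) (hWn : frobNorm W = 1)
    (X : Matrix (Fin n₁) (Fin n₂) ℂ) :
    re ⟪frobVec X, frobVec W⟫_ℂ ≤ frobNorm (proj J * X * proj K) := by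
  rw [← hW, ← inner_frobVec_proj_mul_mul_proj]
  calc _ ≤ ‖frobVec (proj J * X * proj K)‖ * ‖frobVec W‖ := re_inner_le_norm _ _
    _ = _ := by rw [← frobNorm_eq_norm, ← frobNorm_eq_norm, hWn, mul_one]

end

theorem column_upper_bound_general {n₁ n₂ m s₁ s₂ : ℕ} (δ : ℝ)
    (A : Fin m → Matrix (Fin n₁) (Fin n₂) ℂ)
    (hRIP : RIP A (3 * s₁) (3 * s₂) 2 δ)
    (u : Fin n₁ → ℂ) (hu : Sparse s₁ u) (hun : l2norm u = 1)
    (v : Fin n₂ → ℂ) (hv : Sparse s₂ v) (hvn : l2norm v = 1)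
    (z : Fin m → ℂ) (hA : opA A (outer u v) ≠ 0)
    (ν : ℝ) (hν : ν = l2norm z / l2norm (opA A (outer u v)))
    (b : Fin m → ℂ) (hb : b = opA A (outer u v) + z)
    (J₁ : Finset (Fin n₁)) (hJ₁ : J₁.card ≤ s₁) (k : Fin n₂) :
    frobNorm (proj J₁ * opAadj A b * proj {k}) ≤
      l2norm ((proj J₁).mulVec u) * ‖v k‖ + (δ + ν + δ * ν) := by
  have huvn : frobNorm (outer u v) = 1 := by rw [frobNorm_outer, hun, hvn, one_mul]
  have hs₂ : 1 ≤ s₂ := hv.one_le fun hv0 => by simp [hv0, l2norm] at hvn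
  have huv : IsSparseLowRank s₁ s₂ 1 (outer u v) := isSparseLowRank_outer hu hv
  have hδ : 0 ≤ δ := hRIP.nonneg (huv.mono (by omega) (by omega) (by omega)) (by simp [huvn])
  have hν₀ : 0 ≤ ν := hν ▸ div_nonneg (l2norm_nonneg _) (l2norm_nonneg _)
  have hβ : 0 ≤ l2norm ((proj J₁).mulVec u) * ‖v k‖ + (δ + ν + δ * ν) :=
    add_nonneg (mul_nonneg (l2norm_nonneg _) (norm_nonneg _)) (by positivity)
  refine frobNorm_proj_mul_mul_proj_le J₁ {k} _ hβ fun W hCW hWn => ?_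
  have hW : IsSparseLowRank s₁ s₂ 1 W :=
    hCW ▸ (isSparseLowRank_proj_mul_mul_proj J₁ {k} W).mono hJ₁ (by simpa using hs₂) (by simp)
  have hsignal := re_inner_le_frobNorm_proj_mul_mul_proj hCW hWn (outer u v)
  rw [proj_mul_outer_mul_proj, frobNorm_outer, l2norm_proj_singleton_mulVec] at hsignal
  have hbound := hRIP.re_inner_opAadj_le (huv.mono (by omega) (by omega) (by omega))
    (hW.mono (by omega) (by omega) (by omega)) ((huv.add hW).mono (by omega) (by omega) le_rfl)
    ((huv.sub hW).mono (by omega) (by omega) le_rfl) huvn hWn hA z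
  rw [hb, hν]
  linarith

/-- Upper bound for the Frobenius norm of any column of 𝒜*(b). -/
theorem column_upper_bound {n₁ n₂ m s₁ s₂ : ℕ} (δ : ℝ) (hδ : 0 < δ)
    (A : Fin m → Matrix (Fin n₁) (Fin n₂) ℂ)
    (hRIP : RIP A (3 * s₁) (3 * s₂) 2 δ)
    (u : Fin n₁ → ℂ) (hu : Sparse s₁ u) (hun : l2norm u = 1)
    (v : Fin n₂ → ℂ) (hv : Sparse s₂ v) (hvn : l2norm v = 1)
    (z : Fin m → ℂ) (hA : opA A (outer u v) ≠ 0)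
    (ν : ℝ) (hν : ν = l2norm z / l2norm (opA A (outer u v)))
    (b : Fin m → ℂ) (hb : b = opA A (outer u v) + z)
    (J₁ : Finset (Fin n₁)) (hJ₁ : J₁.card ≤ s₁) (k : Fin n₂) :
    frobNorm (proj J₁ * opAadj A b * proj {k}) ≤
      l2norm ((proj J₁).mulVec u) * ‖v k‖ + (δ + ν + δ * ν) :=
  column_upper_bound_general δ A hRIP u hu hun v hv hvn z hA ν hν b hb J₁ hJ₁ k
end
end

section
/- Let k ∈ [n₁], 0 < ξ ≤ 1, 0 < μ ≤ 1, and let δ ≥ 0 and ν ≥ 0 satisfy 2(δ + ν + δν) ≤ ξ/√(2k). Let u ∈ ℂ^{n₁} with ‖u‖ = 1 and ‖u‖_[k] ≥ ξ, and let v ∈ ℂ^{n₂} with ‖v‖ = 1 and ‖v‖_∞ ≥ μ. Then the set J̃₁ := {j ∈ [n₁] : |u_j| ≥ 2(δ + ν + δν)} satisfies ‖Π_{J̃₁} u‖·‖v‖_∞ ≥ ξμ/√2. -/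
open scoped BigOperators
noncomputable section
open Classical

/-! Among any `k` coordinates, those of modulus below `t = ξ / √(2k)` carry at most
`k t² = ξ² / 2` of the squared mass. A set of `k` coordinates with squared mass `ξ²`, which
`‖u‖_[k] ≥ ξ` provides, therefore keeps at least `ξ² / 2` of it on the coordinates where
`|u_j| ≥ 2(δ + ν + δν)`, a threshold below `t`. -/

theorem l2norm_proj_mulVec {n : ℕ} (J : Finset (Fin n)) (x : Fin n → ℂ) :
    l2norm ((proj J).mulVec x) = Real.sqrt (∑ i ∈ J, ‖x i‖ ^ 2) := by
  have hcoord : ∀ i, (proj J).mulVec x i = if i ∈ J then x i else 0 := by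
    intro i
    simp only [proj, Matrix.mulVec_diagonal, ite_mul, one_mul, zero_mul]
  simp only [l2norm, hcoord, apply_ite (fun z : ℂ => ‖z‖ ^ 2), norm_zero]
  simp [Finset.sum_ite_mem]

theorem exists_card_eq_knorm_eq {n k : ℕ} (x : Fin n → ℂ) (hkn : k ≤ n) :
    ∃ I : Finset (Fin n), I.card = k ∧ knorm k x = Real.sqrt (∑ i ∈ I, ‖x i‖ ^ 2) := by
  set S := {c : ℝ | ∃ I : Finset (Fin n), I.card = k ∧ c = Real.sqrt (∑ i ∈ I, ‖x i‖ ^ 2)}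
  have hfin : S.Finite :=
    (Set.finite_range fun I : Finset (Fin n) => Real.sqrt (∑ i ∈ I, ‖x i‖ ^ 2)).subset
      (by rintro c ⟨I, -, rfl⟩; exact ⟨I, rfl⟩)
  obtain ⟨I, -, hIcard⟩ :=
    Finset.exists_subset_card_eq (s := (Finset.univ : Finset (Fin n))) (by simpa using hkn)
  exact Set.Nonempty.csSup_mem (s := S) ⟨_, I, hIcard, rfl⟩ hfin

theorem sum_sq_le_sum_filter_sq_add {ι E : Type*} [Fintype ι] [SeminormedAddCommGroup E]
    (x : ι → E) (I : Finset ι) {τ t : ℝ} (hτt : τ ≤ t) :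
    ∑ i ∈ I, ‖x i‖ ^ 2 ≤
      ∑ i ∈ Finset.univ.filter (fun i => τ ≤ ‖x i‖), ‖x i‖ ^ 2 + I.card * t ^ 2 := by
  set J := Finset.univ.filter (fun i => τ ≤ ‖x i‖)
  have hsmall : ∀ i ∈ I \ J, ‖x i‖ ^ 2 ≤ t ^ 2 := by
    intro i hi
    have hlt : ‖x i‖ < τ := by simpa [J] using (Finset.mem_sdiff.mp hi).2
    exact pow_le_pow_left₀ (norm_nonneg _) (hlt.le.trans hτt) 2
  calc ∑ i ∈ I, ‖x i‖ ^ 2 = ∑ i ∈ I ∩ J, ‖x i‖ ^ 2 + ∑ i ∈ I \ J, ‖x i‖ ^ 2 :=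
        (Finset.sum_inter_add_sum_sdiff I J _).symm
    _ ≤ ∑ i ∈ J, ‖x i‖ ^ 2 + (I \ J).card * t ^ 2 := by
        refine add_le_add ?_ (by simpa using Finset.sum_le_card_nsmul _ _ _ hsmall)
        exact Finset.sum_le_sum_of_subset_of_nonneg Finset.inter_subset_right
          fun i _ _ => sq_nonneg _
    _ ≤ ∑ i ∈ J, ‖x i‖ ^ 2 + I.card * t ^ 2 := by
        gcongr
        exact Finset.sdiff_subset

theorem peakiness_lower_bound_general {n₁ n₂ : ℕ} (k : ℕ) (hk1 : 1 ≤ k) (hkn : k ≤ n₁)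
    (ξ μ : ℝ) (hξ0 : 0 < ξ) (hμ0 : 0 < μ)
    (δ ν : ℝ)
    (hsmall : 2 * (δ + ν + δ * ν) ≤ ξ / Real.sqrt (2 * k))
    (u : Fin n₁ → ℂ) (hknorm : ξ ≤ knorm k u)
    (v : Fin n₂ → ℂ) (hvinf : μ ≤ linftyNorm v) :
    ξ * μ / Real.sqrt 2 ≤
      l2norm ((proj (Finset.univ.filter
          fun j => 2 * (δ + ν + δ * ν) ≤ ‖u j‖)).mulVec u) * linftyNorm v := by
  obtain ⟨I, hIcard, hI⟩ := exists_card_eq_knorm_eq u hkn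
  have hmassI : ξ ^ 2 ≤ ∑ i ∈ I, ‖u i‖ ^ 2 := (Real.le_sqrt' hξ0).mp (hI ▸ hknorm)
  have htail : (k : ℝ) * (ξ / Real.sqrt (2 * k)) ^ 2 = ξ ^ 2 / 2 := by
    have hk : (0 : ℝ) < k := by exact_mod_cast hk1
    rw [div_pow, Real.sq_sqrt (by positivity)]
    field_simp
  have hmassJ := sum_sq_le_sum_filter_sq_add u I hsmall
  rw [hIcard, htail] at hmassJ
  have hl2 : ξ / Real.sqrt 2 ≤ l2norm ((proj (Finset.univ.filter
      fun j => 2 * (δ + ν + δ * ν) ≤ ‖u j‖)).mulVec u) := by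
    rw [l2norm_proj_mulVec]
    apply Real.le_sqrt_of_sq_le
    rw [div_pow, Real.sq_sqrt zero_le_two]
    linarith
  calc ξ * μ / Real.sqrt 2 = ξ / Real.sqrt 2 * μ := by ring
    _ ≤ _ := mul_le_mul hl2 hvinf hμ0.le (Real.sqrt_nonneg _)

/-- Peakiness of the pair (u, v) in terms of the sets of large entries. -/
theorem peakiness_lower_bound {n₁ n₂ : ℕ} (k : ℕ) (hk1 : 1 ≤ k) (hkn : k ≤ n₁)
    (ξ μ : ℝ) (hξ0 : 0 < ξ) (hξ1 : ξ ≤ 1) (hμ0 : 0 < μ) (hμ1 : μ ≤ 1)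
    (δ ν : ℝ) (hδ : 0 ≤ δ) (hν : 0 ≤ ν)
    (hsmall : 2 * (δ + ν + δ * ν) ≤ ξ / Real.sqrt (2 * k))
    (u : Fin n₁ → ℂ) (hu : l2norm u = 1) (hknorm : ξ ≤ knorm k u)
    (v : Fin n₂ → ℂ) (hv : l2norm v = 1) (hvinf : μ ≤ linftyNorm v) :
    ξ * μ / Real.sqrt 2 ≤
      l2norm ((proj (Finset.univ.filter
          fun j => 2 * (δ + ν + δ * ν) ≤ ‖u j‖)).mulVec u) * linftyNorm v :=
  peakiness_lower_bound_general k hk1 hkn ξ μ hξ0 hμ0 δ ν hsmall u hknorm v hvinf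

end
end
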